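/- arXiv:1201.1622 — 6 statements merged into one kernel-verified Lean document; each statement's English description precedes it below -/
import Mathlib

section
/- Let s ≥ 2, l ≥ 1, and let ζ be a substitution of constant length q on the alphabet 𝒜 = {a₁,…,a_s} such that: (1) for every j, the word ζ(a_j) begins with the two-letter word a₁a_j and ends with the letter a₁; and (2) ζ(a₁) contains as a subword every word of the form ωa_j where ω ranges over all words of length l over 𝒜 and a_j over 𝒜. Then for every m ≥ 1, p_ζ(lq^m + Σ_{i=0}^{m−1} q^i + 1) − p_ζ(lq^m + Σ_{i=0}^{m−1} q^i) ≥ s^l(s − 1). -/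
open Matrix

/-! ### Substitutions and their dynamical systems -/

/-- Apply a substitution to a finite word, by concatenation. -/
def wordApply {A : Type*} (σ : A → List A) (w : List A) : List A := w.flatMap σ

/-- The `n`-th iterate `σⁿ(a)` of the substitution applied to a letter `a`. -/
def substIter {A : Type*} (σ : A → List A) (n : ℕ) (a : A) : List A :=
  (wordApply σ)^[n] [a]

/-- A substitution is primitive if some (positive) iterate of every letter contains
every letter. -/
def IsPrimitive {A : Type*} (σ : A → List A) : Prop :=
  ∃ n : ℕ, 0 < n ∧ ∀ a b : A, b ∈ substIter σ n a

/-- A substitution is proper if for some `n ≥ 1` there are letters `a`, `b` such that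
`σⁿ(c)` starts with `a` and ends with `b` for every letter `c`. -/
def IsProper {A : Type*} (σ : A → List A) : Prop :=
  ∃ n : ℕ, 0 < n ∧ ∃ a b : A, ∀ c : A,
    (substIter σ n c).head? = some a ∧ (substIter σ n c).getLast? = some b

/-- The language of a substitution: all finite words occurring in some `σⁿ(a)`. -/
def Lang {A : Type*} (σ : A → List A) : Set (List A) :=
  { w | ∃ (n : ℕ) (a : A), w <:+: substIter σ n a }

/-- The complexity function of a substitution: the number of words of length `n`
in its language. -/
noncomputable def substComplexity {A : Type*} (σ : A → List A) (n : ℕ) : ℕ :=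
  Set.ncard { w | w ∈ Lang σ ∧ w.length = n }

/-- The finite word `x_i x_{i+1} ⋯ x_{i+n-1}` occurring in a two-sided sequence `x`. -/
def factor {A : Type*} (x : ℤ → A) (i : ℤ) (n : ℕ) : List A :=
  List.ofFn fun j : Fin n => x (i + (j : ℕ))

/-- The subshift `X_σ` of a substitution: all two-sided sequences all of whose finite
subwords belong to the language of `σ`. -/
def SubshiftSet {A : Type*} (σ : A → List A) : Set (ℤ → A) :=
  { x | ∀ (i : ℤ) (n : ℕ), factor x i n ∈ Lang σ }

/-- A substitution is aperiodic when its subshift is infinite. -/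
def IsAperiodic {A : Type*} (σ : A → List A) : Prop :=
  (SubshiftSet σ).Infinite

/-- The `n`-th power of the shift on two-sided sequences. -/
def zshift {A : Type*} (n : ℤ) (x : ℤ → A) : ℤ → A := fun m => x (m + n)

lemma factor_zshift {A : Type*} (x : ℤ → A) (n i : ℤ) (k : ℕ) :
    factor (zshift n x) i k = factor x (i + n) k := by
  unfold factor zshift
  congr 1
  funext j
  congr 1
  ring

lemma zshift_mem {A : Type*} {σ : A → List A} {x : ℤ → A}
    (hx : x ∈ SubshiftSet σ) (n : ℤ) : zshift n x ∈ SubshiftSet σ := by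
  intro i k
  rw [factor_zshift]
  exact hx _ _

/-- The shift homeomorphism `T_σ` restricted to the subshift `X_σ`. -/
def shiftMap {A : Type*} (σ : A → List A) (x : SubshiftSet σ) : SubshiftSet σ :=
  ⟨zshift 1 x.1, zshift_mem x.2 1⟩

/-- Conjugacy (topological isomorphism) of two substitution dynamical systems. -/
def Conjugate {A B : Type*} [TopologicalSpace A] [TopologicalSpace B]
    (σ : A → List A) (ζ : B → List B) : Prop :=
  ∃ h : SubshiftSet σ ≃ₜ SubshiftSet ζ, ∀ x, h (shiftMap σ x) = shiftMap ζ (h x)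

/-- Orbit equivalence of two substitution dynamical systems: a homeomorphism between
the subshifts mapping shift-orbits onto shift-orbits. -/
def OrbitEquivalent {A B : Type*} [TopologicalSpace A] [TopologicalSpace B]
    (σ : A → List A) (ζ : B → List B) : Prop :=
  ∃ h : SubshiftSet σ ≃ₜ SubshiftSet ζ,
    ∀ x y : SubshiftSet σ,
      (∃ n : ℤ, (y : ℤ → A) = zshift n x) ↔
      (∃ n : ℤ, ((h y : ℤ → B)) = zshift n (h x))

/-- Strong orbit equivalence: an orbit equivalence whose two orbit cocycles each have
at most one point of discontinuity. -/
def StrongOrbitEquivalent {A B : Type*} [TopologicalSpace A] [TopologicalSpace B]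
    (σ : A → List A) (ζ : B → List B) : Prop :=
  ∃ h : SubshiftSet σ ≃ₜ SubshiftSet ζ,
    (∀ x y : SubshiftSet σ,
      (∃ n : ℤ, (y : ℤ → A) = zshift n x) ↔
      (∃ n : ℤ, ((h y : ℤ → B)) = zshift n (h x))) ∧
    ∃ nc mc : SubshiftSet σ → ℤ,
      (∀ x, ((h (shiftMap σ x) : ℤ → B)) = zshift (nc x) (h x)) ∧
      (∀ x, zshift (mc x) (x : ℤ → A) = ((h.symm (shiftMap ζ (h x)) : ℤ → A))) ∧
      { x | ¬ ContinuousAt nc x }.Subsingleton ∧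
      { x | ¬ ContinuousAt mc x }.Subsingleton

/-- The incidence matrix of a substitution: entry `(i, j)` counts the occurrences of
the letter `i` in `σ(j)`. -/
def incidenceMatrix {A : Type*} [DecidableEq A] (σ : A → List A) : Matrix A A ℕ :=
  Matrix.of fun i j => (σ j).count i

/-! ### Primitive integer matrices and the clopen values set -/

/-- A square matrix with nonnegative integer entries is primitive if some positive power
has all entries strictly positive. -/
def MatPrimitive {I : Type*} [Fintype I] [DecidableEq I] (A : Matrix I I ℕ) : Prop :=
  ∃ n : ℕ, 0 < n ∧ ∀ i j, 0 < (A ^ n) i j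

/-- `PerronPair A lam x` : `lam` is an eigenvalue of `A` (viewed as a real matrix) with
strictly positive eigenvector `x`; for a primitive matrix this characterizes the
Perron–Frobenius eigenvalue. -/
def PerronPair {I : Type*} [Fintype I] (A : Matrix I I ℕ) (lam : ℝ) (x : I → ℝ) : Prop :=
  (∀ i, 0 < x i) ∧ (A.map (Nat.cast : ℕ → ℝ)) *ᵥ x = lam • x

/-- `H(x)`: the additive subgroup of `ℝ` generated by the entries of `x`. -/
def Hgroup {I : Type*} (x : I → ℝ) : Set ℝ :=
  (AddSubgroup.closure (Set.range x) : AddSubgroup ℝ)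

/-- `S(A) = ⋃_{N ≥ 0} λ^{-N} H(x)` where `λ` is the Perron–Frobenius eigenvalue of `A`
and `x` its normalized positive eigenvector. -/
def Sval {I : Type*} (lam : ℝ) (x : I → ℝ) : Set ℝ :=
  { z | ∃ (N : ℕ) (h : ℝ), h ∈ Hgroup x ∧ z = h / lam ^ N }

/-- A Perron number: a real algebraic integer `> 1` strictly larger in absolute value
than each of its other Galois conjugates (the other complex roots of its minimal
polynomial over `ℚ`). -/
def IsPerronNumber (lam : ℝ) : Prop :=
  IsIntegral ℤ lam ∧ 1 < lam ∧
  ∀ z : ℂ, (Polynomial.aeval z) (minpoly ℚ lam) = 0 → z ≠ (lam : ℂ) → ‖z‖ < lam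

/-- The words of length `n` occurring in a two-sided sequence `u`. -/
def zLang {A : Type*} (u : ℤ → A) (n : ℕ) : Set (List A) :=
  { w | ∃ i : ℤ, w = factor u i n }

/-- The complexity function of a two-sided sequence. -/
noncomputable def zComplexity {A : Type*} (u : ℤ → A) (n : ℕ) : ℕ :=
  (zLang u n).ncard

/-!
For `ω` of length `l`, the words `ζ^m(ω) ζ^{m-1}(a₁) ⋯ ζ(a₁) a₁` have length
`n = l q^m + ∑_{i<m} q^i`. They are pairwise distinct because `ζ^m` is injective on letters, and
each of them extends to the right by every letter `a_j`, since `ζ^{m-1}(a₁) ⋯ ζ(a₁) a₁ a_j` is a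
prefix of `ζ^m(a_j)` and `ω a_j` occurs in `ζ(a₁)`. As every word of the language has at least one
right extension, counting the words of length `n + 1` by their prefixes of length `n` gives at
least `s^l (s - 1)` more of them than there are words of length `n`.
-/

section Substitution

variable {A : Type*} (σ : A → List A)

@[simp] lemma wordApply_nil : wordApply σ [] = [] := rfl

@[simp] lemma wordApply_cons (a : A) (w : List A) :
    wordApply σ (a :: w) = σ a ++ wordApply σ w :=
  List.flatMap_cons

@[simp] lemma wordApply_append (u v : List A) :
    wordApply σ (u ++ v) = wordApply σ u ++ wordApply σ v :=
  List.flatMap_append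

lemma wordApply_singleton (a : A) : wordApply σ [a] = σ a := by simp

lemma List.IsInfix.wordApply {u v : List A} (h : u <:+: v) : wordApply σ u <:+: wordApply σ v :=
  h.flatMap σ

lemma length_wordApply {q : ℕ} (hq : ∀ a, (σ a).length = q) (w : List A) :
    (wordApply σ w).length = q * w.length := by
  induction w with
  | nil => simp
  | cons a w ih => simp [ih, hq, mul_add, add_comm]

lemma eq_of_wordApply_eq {q : ℕ} (hq : ∀ a, (σ a).length = q) (hσ : Function.Injective σ)
    {u v : List A} (hlen : u.length = v.length) (h : wordApply σ u = wordApply σ v) : u = v := by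
  induction u generalizing v with
  | nil => exact (List.length_eq_zero_iff.mp hlen.symm).symm
  | cons a u ih =>
    obtain ⟨b, v, rfl⟩ := List.exists_cons_of_length_eq_add_one hlen.symm
    rw [wordApply_cons, wordApply_cons] at h
    obtain ⟨hab, huv⟩ := List.append_inj h (by rw [hq, hq])
    rw [hσ hab, ih (by simpa using hlen) huv]

lemma substIter_succ' (m : ℕ) (a : A) :
    substIter σ (m + 1) a = wordApply σ (substIter σ m a) :=
  Function.iterate_succ_apply' _ _ _

lemma iterate_wordApply (m : ℕ) (w : List A) :
    (wordApply σ)^[m] w = wordApply (substIter σ m) w := by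
  induction m generalizing w with
  | zero => simp [wordApply, show substIter σ 0 = ([·]) from rfl]
  | succ m ih =>
    rw [Function.iterate_succ_apply', ih, funext (substIter_succ' σ m)]
    simp [wordApply, List.flatMap_assoc]

lemma substIter_succ (m : ℕ) (a : A) :
    substIter σ (m + 1) a = wordApply (substIter σ m) (σ a) := by
  rw [substIter, Function.iterate_succ_apply, wordApply_singleton, iterate_wordApply]

lemma length_substIter {q : ℕ} (hq : ∀ a, (σ a).length = q) (m : ℕ) (a : A) :
    (substIter σ m a).length = q ^ m := by
  induction m with
  | zero => rfl
  | succ m ih => rw [substIter_succ', length_wordApply σ hq, ih, pow_succ, mul_comm]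

lemma substIter_append_self_prefix {b : A} (hb : [b, b] <+: σ b) (m : ℕ) :
    substIter σ m b ++ substIter σ m b <+: substIter σ (m + 1) b := by
  obtain ⟨r, hr⟩ := hb
  rw [substIter_succ, ← hr]
  simp

lemma substIter_ne_nil {b : A} (hb : [b, b] <+: σ b) (m : ℕ) : substIter σ m b ≠ [] := by
  induction m with
  | zero => simp [substIter]
  | succ m ih =>
    intro h
    simpa [h, ih] using substIter_append_self_prefix σ hb m

/-- `commonPrefix σ b m = σ^{m-1}(b) ⋯ σ(b) b`. -/
def commonPrefix (b : A) : ℕ → List A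
  | 0 => []
  | m + 1 => wordApply σ (commonPrefix b m) ++ [b]

lemma length_commonPrefix {q : ℕ} (hq : ∀ a, (σ a).length = q) (b : A) (m : ℕ) :
    (commonPrefix σ b m).length = ∑ i ∈ Finset.range m, q ^ i := by
  induction m with
  | zero => rfl
  | succ m ih =>
    rw [commonPrefix, List.length_append, length_wordApply σ hq, ih, Finset.sum_range_succ',
      Finset.mul_sum]
    simp [pow_succ, mul_comm]

lemma commonPrefix_append_prefix_substIter {b : A} (hpre : ∀ a, [b, a] <+: σ a) (m : ℕ)
    (a : A) : commonPrefix σ b m ++ [a] <+: substIter σ m a := by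
  induction m with
  | zero => exact List.prefix_refl _
  | succ m ih =>
    obtain ⟨t, ht⟩ := ih
    obtain ⟨r, hr⟩ := hpre a
    refine ⟨r ++ wordApply σ t, ?_⟩
    rw [substIter_succ', ← ht, commonPrefix]
    simp [← hr]

lemma substIter_injective {b : A} (hpre : ∀ a, [b, a] <+: σ a) (m : ℕ) :
    Function.Injective (substIter σ m) := by
  intro a a' h
  have h1 := commonPrefix_append_prefix_substIter σ hpre m a
  have h2 := commonPrefix_append_prefix_substIter σ hpre m a'
  rw [h] at h1
  simpa using (List.prefix_of_prefix_length_le h1 h2 (by simp)).eq_of_length (by simp)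

lemma injective_wordApply_substIter_ofFn_append {q : ℕ} (hq : ∀ a, (σ a).length = q) {b : A}
    (hpre : ∀ a, [b, a] <+: σ a) (m l : ℕ) (P : List A) :
    Function.Injective fun f : Fin l → A => wordApply (substIter σ m) (List.ofFn f) ++ P := by
  intro f g h
  have hq' := length_substIter σ hq m
  have hlen := List.append_inj h (by simp [length_wordApply _ hq'])
  exact List.ofFn_injective <|
    eq_of_wordApply_eq _ hq' (substIter_injective σ hpre m) (by simp) hlen.1

end Substitution

section Language

variable {A : Type*} {σ : A → List A}

lemma mem_Lang_of_infix {u v : List A} (h : u <:+: v) (hv : v ∈ Lang σ) : u ∈ Lang σ := by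
  obtain ⟨n, a, hva⟩ := hv
  exact ⟨n, a, h.trans hva⟩

lemma exists_append_singleton_infix_append_self {v S : List A} (h : v <:+: S) (hS : S ≠ []) :
    ∃ c, v ++ [c] <:+: S ++ S := by
  obtain ⟨p, t, hpt⟩ := h
  cases t with
  | cons c t =>
    have hvc : v ++ [c] <:+: S := ⟨p, t, by rw [← hpt]; simp⟩
    exact ⟨c, hvc.trans (List.prefix_append _ _).isInfix⟩
  | nil =>
    obtain ⟨c, S', hS'⟩ := List.exists_cons_of_ne_nil hS
    refine ⟨c, p, S', ?_⟩
    calc p ++ (v ++ [c]) ++ S' = p ++ v ++ (c :: S') := by simp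
      _ = S ++ S := by rw [← hS', ← hpt]; simp

/-- Every word of the language extends to the right inside `σ^{N+1}(b) σ^{N+1}(b)`, a prefix
of `σ^{N+2}(b)`. -/
lemma exists_append_singleton_mem_Lang {b : A} (hb : [b, b] <+: σ b) (hocc : ∀ a, a ∈ σ b)
    {v : List A} (hv : v ∈ Lang σ) : ∃ c, v ++ [c] ∈ Lang σ := by
  obtain ⟨N, a, hva⟩ := hv
  have hvS : v <:+: substIter σ (N + 1) b := by
    rw [substIter_succ]
    refine hva.trans ?_
    simpa using ((List.singleton_infix_iff _ _).mpr (hocc a)).wordApply (substIter σ N)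
  obtain ⟨c, hc⟩ := exists_append_singleton_infix_append_self hvS (substIter_ne_nil σ hb _)
  exact ⟨c, N + 2, b, hc.trans (substIter_append_self_prefix σ hb _).isInfix⟩

/-- `σ^m(w) σ^{m-1}(b) ⋯ σ(b) b a` is a prefix of `σ^m(w a)`. -/
lemma wordApply_append_commonPrefix_append_mem_Lang {b : A} (hpre : ∀ a, [b, a] <+: σ a)
    {w : List A} {a : A} (hw : w ++ [a] <:+: σ b) (m : ℕ) :
    wordApply (substIter σ m) w ++ commonPrefix σ b m ++ [a] ∈ Lang σ := by
  obtain ⟨t, ht⟩ := commonPrefix_append_prefix_substIter σ hpre m a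
  refine ⟨m + 1, b, ?_⟩
  rw [substIter_succ]
  have hprefix : wordApply (substIter σ m) w ++ commonPrefix σ b m ++ [a] <+:
      wordApply (substIter σ m) (w ++ [a]) := ⟨t, by simp [← ht]⟩
  exact hprefix.isInfix.trans (hw.wordApply _)

end Language

section Counting

open Finset

variable {A : Type*} [Fintype A]

lemma card_filter_append_singleton_mem_le_card_fiber [DecidableEq A] {L : Set (List A)}
    [DecidablePred (· ∈ L)] {n : ℕ}
    {T : Finset (List A)} (hT : ∀ u, u ∈ T ↔ u ∈ L ∧ u.length = n + 1) {v : List A}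
    (hv : v.length = n) :
    #{c | v ++ [c] ∈ L} ≤ #{u ∈ T | u.dropLast = v} := by
  rw [← card_image_of_injective _
    ((List.append_right_injective v).comp List.singleton_injective)]
  refine card_le_card fun u hu => ?_
  obtain ⟨c, hc, rfl⟩ := mem_image.mp hu
  simp_all

theorem ncard_add_card_mul_le_ncard_succ {L : Set (List A)}
    (hL : ∀ ⦃u v⦄, u <+: v → v ∈ L → u ∈ L) (hext : ∀ v ∈ L, ∃ c, v ++ [c] ∈ L) {n : ℕ}
    {S : Finset (List A)} (hSL : ∀ v ∈ S, v ∈ L ∧ v.length = n)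
    (hS : ∀ v ∈ S, ∀ c, v ++ [c] ∈ L) :
    {w | w ∈ L ∧ w.length = n}.ncard + #S * (Fintype.card A - 1) ≤
      {w | w ∈ L ∧ w.length = n + 1}.ncard := by
  classical
  have hfin (k : ℕ) : {w | w ∈ L ∧ w.length = k}.Finite :=
    (List.finite_length_eq A k).subset fun w hw => hw.2
  rw [Set.ncard_eq_toFinset_card _ (hfin n), Set.ncard_eq_toFinset_card _ (hfin (n + 1))]
  set F := (hfin n).toFinset
  set T := (hfin (n + 1)).toFinset
  have hSF : S ⊆ F := fun v hv => by simpa [F] using hSL v hv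
  have hmaps : ∀ u ∈ T, u.dropLast ∈ F := fun u hu => by
    simp only [T, F, Set.Finite.mem_toFinset, Set.mem_ofPred_eq, List.length_dropLast] at hu ⊢
    exact ⟨hL (List.dropLast_prefix u) hu.1, by omega⟩
  have hfiber : ∀ v ∈ F, 1 + (if v ∈ S then Fintype.card A - 1 else 0) ≤
      #{u ∈ T | u.dropLast = v} := by
    intro v hv
    simp only [F, Set.Finite.mem_toFinset, Set.mem_ofPred_eq] at hv
    have hle :=
      card_filter_append_singleton_mem_le_card_fiber (L := L) (T := T) (by simp [T]) hv.2
    obtain ⟨c, hc⟩ := hext v hv.1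
    have hpos : 0 < #{u ∈ T | u.dropLast = v} :=
      (card_pos.mpr ⟨c, by simpa using hc⟩).trans_le hle
    split_ifs with hvS
    · rw [filter_true_of_mem fun c _ => hS v hvS c, card_univ] at hle
      omega
    · omega
  calc #F + #S * (Fintype.card A - 1)
      = ∑ v ∈ F, (1 + if v ∈ S then Fintype.card A - 1 else 0) := by
        rw [sum_add_distrib, sum_ite_mem, inter_eq_right.mpr hSF]
        simp [mul_comm]
    _ ≤ ∑ v ∈ F, #{u ∈ T | u.dropLast = v} := sum_le_sum hfiber
    _ = #T := (card_eq_sum_card_fiberwise hmaps).symm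

end Counting

theorem complexity_jump_constant_length_general
    {A : Type*} [Fintype A] (s q l : ℕ) (hcard : Fintype.card A = s)
    (a1 : A) (ζ : A → List A)
    (hq : ∀ a, (ζ a).length = q)
    (hpre : ∀ j : A, [a1, j] <+: ζ j)
    (hcontain : ∀ w : List A, w.length = l → ∀ j : A, (w ++ [j]) <:+: ζ a1) :
    ∀ m : ℕ, 1 ≤ m →
      substComplexity ζ (l * q ^ m + ∑ i ∈ Finset.range m, q ^ i) + s ^ l * (s - 1) ≤
      substComplexity ζ (l * q ^ m + ∑ i ∈ Finset.range m, q ^ i + 1) := by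
  classical
  intro m _
  let special (f : Fin l → A) : List A :=
    wordApply (substIter ζ m) (List.ofFn f) ++ commonPrefix ζ a1 m
  have hspecial (f : Fin l → A) (j : A) : special f ++ [j] ∈ Lang ζ :=
    wordApply_append_commonPrefix_append_mem_Lang hpre (hcontain _ List.length_ofFn j) m
  have hlength (f : Fin l → A) :
      (special f).length = l * q ^ m + ∑ i ∈ Finset.range m, q ^ i := by
    simp [special, length_wordApply _ (length_substIter ζ hq m), length_commonPrefix ζ hq,
      mul_comm]
  have hocc (a : A) : a ∈ ζ a1 := (List.singleton_infix_iff _ _).mp <|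
    (List.suffix_append _ _).isInfix.trans (hcontain (List.replicate l a1) (by simp) a)
  have hcount := ncard_add_card_mul_le_ncard_succ (L := Lang ζ)
    (fun _ _ h => mem_Lang_of_infix h.isInfix)
    (fun _ => exists_append_singleton_mem_Lang (hpre a1) hocc) (S := Finset.univ.image special)
    (by simpa using fun f => ⟨mem_Lang_of_infix (List.prefix_append _ _).isInfix
      (hspecial f a1), hlength f⟩)
    (by simpa using hspecial)
  rwa [Finset.card_image_of_injective _
      (injective_wordApply_substIter_ofFn_append ζ hq hpre _ _ _),
    Finset.card_univ, Fintype.card_fun, Fintype.card_fin, hcard] at hcount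

/-- complexity growth for a constant-length substitution whose images start
with `a₁a_j`, end with `a₁`, and whose image of `a₁` contains all words `ω a_j` with
`|ω| = l`. -/
theorem complexity_jump_constant_length
    {A : Type*} [Fintype A] (s q l : ℕ) (hcard : Fintype.card A = s)
    (hs : 2 ≤ s) (hl : 1 ≤ l) (a1 : A) (ζ : A → List A)
    (hq : ∀ a, (ζ a).length = q)
    (hpre : ∀ j : A, [a1, j] <+: ζ j)
    (hsuf : ∀ j : A, [a1] <:+ ζ j)
    (hcontain : ∀ w : List A, w.length = l → ∀ j : A, (w ++ [j]) <:+: ζ a1) :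
    ∀ m : ℕ, 1 ≤ m →
      substComplexity ζ (l * q ^ m + ∑ i ∈ Finset.range m, q ^ i) + s ^ l * (s - 1) ≤
      substComplexity ζ (l * q ^ m + ∑ i ∈ Finset.range m, q ^ i + 1) :=
  complexity_jump_constant_length_general s q l hcard a1 ζ hq hpre hcontain
end

section
/- Let A be a primitive s×s matrix with nonnegative integer entries whose Perron–Frobenius eigenvalue λ satisfies λ > 1. Then for every n ≥ 1 there exists a primitive (s+n)×(s+n) matrix A_n with nonnegative integer entries such that S(A_n) = S(A). -/
open Matrix

/-! Passing from `A` to a power `A ^ m` replaces `λ` by `λ ^ m` but keeps `S`, because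
`λ H(x) ⊆ H(x)`; for `m` large every entry of `A ^ m` exceeds `n`. Splitting one state of `A ^ m`
into `n + 1` states, so that the rows of the new states over an old state add up to its old row,
gives a positive matrix of size `s + n` with eigenvalue `λ ^ m` and a positive eigenvector `y`
with `H(x) ⊆ H(y)` and `λ ^ m H(y) ⊆ H(x)`; these two inclusions say `S` is unchanged. -/

open Finset

section Hgroup

variable {I J : Type*}

lemma mem_Hgroup (x : I → ℝ) (i : I) : x i ∈ Hgroup x :=
  AddSubgroup.subset_closure (Set.mem_range_self i)

lemma sum_natCast_mul_mem_Hgroup [Fintype I] (x : I → ℝ) (w : I → ℕ) :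
    ∑ i, (w i : ℝ) * x i ∈ Hgroup x :=
  AddSubgroup.sum_mem _ fun i _ => by
    simpa only [nsmul_eq_mul] using AddSubgroup.nsmul_mem _ (mem_Hgroup x i) (w i)

lemma Hgroup_subset_of_forall_mem {x : I → ℝ} {y : J → ℝ} (h : ∀ i, x i ∈ Hgroup y) :
    Hgroup x ⊆ Hgroup y :=
  (AddSubgroup.closure_le _).2 (Set.range_subset_iff.2 h)

lemma mul_mem_Hgroup_of_forall_mul_mem {c : ℝ} {x : I → ℝ} {y : J → ℝ}
    (h : ∀ i, c * x i ∈ Hgroup y) {z : ℝ} (hz : z ∈ Hgroup x) : c * z ∈ Hgroup y := by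
  have hle : AddSubgroup.closure (Set.range x) ≤
      (AddSubgroup.closure (Set.range y)).comap (AddMonoidHom.mulLeft c) :=
    (AddSubgroup.closure_le _).2 (Set.range_subset_iff.2 h)
  exact hle hz

lemma pow_mul_mem_Hgroup {c : ℝ} {x : I → ℝ} (h : ∀ z ∈ Hgroup x, c * z ∈ Hgroup x)
    (k : ℕ) {z : ℝ} (hz : z ∈ Hgroup x) : c ^ k * z ∈ Hgroup x := by
  induction k with
  | zero => simpa using hz
  | succ k ih => simpa only [pow_succ', mul_assoc] using h _ ih

lemma Hgroup_comp_of_surjective {f : J → I} (hf : Function.Surjective f) (x : I → ℝ) :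
    Hgroup (x ∘ f) = Hgroup x := by
  rw [Hgroup, Hgroup, hf.range_comp]

end Hgroup

section Sval

variable {I J : Type*}

lemma Sval_comp_of_surjective {f : J → I} (hf : Function.Surjective f) (μ : ℝ)
    (x : I → ℝ) : Sval μ (x ∘ f) = Sval μ x := by
  rw [Sval, Sval, Hgroup_comp_of_surjective hf]

lemma Sval_mono {μ : ℝ} {x : I → ℝ} {y : J → ℝ} (h : Hgroup x ⊆ Hgroup y) :
    Sval μ x ⊆ Sval μ y := by
  rintro _ ⟨N, z, hz, rfl⟩
  exact ⟨N, z, h hz, rfl⟩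

lemma Sval_subset_of_mul_mem {μ : ℝ} (hμ : μ ≠ 0) {x : I → ℝ} {y : J → ℝ}
    (h : ∀ z ∈ Hgroup y, μ * z ∈ Hgroup x) : Sval μ y ⊆ Sval μ x := by
  rintro _ ⟨N, z, hz, rfl⟩
  refine ⟨N + 1, μ * z, h z hz, ?_⟩
  rw [pow_succ, mul_comm _ μ, mul_div_mul_left _ _ hμ]

lemma Sval_pow {lam : ℝ} (hlam : lam ≠ 0) {x : I → ℝ}
    (h : ∀ z ∈ Hgroup x, lam * z ∈ Hgroup x) {m : ℕ} (hm : 0 < m) :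
    Sval (lam ^ m) x = Sval lam x := by
  ext w
  constructor
  · rintro ⟨N, z, hz, rfl⟩
    exact ⟨m * N, z, hz, by rw [pow_mul]⟩
  · rintro ⟨N, z, hz, rfl⟩
    refine ⟨N, lam ^ ((m - 1) * N) * z, pow_mul_mem_Hgroup h _ hz, ?_⟩
    have hexp : (lam ^ m) ^ N = lam ^ ((m - 1) * N) * lam ^ N := by
      rw [← pow_mul, ← pow_add, ← add_one_mul, Nat.sub_one_add_one hm.ne']
    rw [hexp, mul_div_mul_left _ _ (pow_ne_zero _ hlam)]

end Sval

section PerronPair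

variable {I J : Type*} [Fintype I] {A : Matrix I I ℕ} {lam : ℝ} {x : I → ℝ}

lemma sum_mul_eq_of_mulVec_eq_smul (h : A.map (Nat.cast : ℕ → ℝ) *ᵥ x = lam • x) (i : I) :
    ∑ j, (A i j : ℝ) * x j = lam * x i := by
  simpa [mulVec, dotProduct] using congrFun h i

lemma PerronPair.mul_mem_Hgroup (h : PerronPair A lam x) {z : ℝ} (hz : z ∈ Hgroup x) :
    lam * z ∈ Hgroup x :=
  mul_mem_Hgroup_of_forall_mul_mem
    (fun i => sum_mul_eq_of_mulVec_eq_smul h.2 i ▸ sum_natCast_mul_mem_Hgroup x (A i)) hz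

lemma PerronPair.pow [DecidableEq I] (h : PerronPair A lam x) (m : ℕ) :
    PerronPair (A ^ m) (lam ^ m) x := by
  refine ⟨h.1, ?_⟩
  rw [show (A ^ m).map (Nat.cast : ℕ → ℝ) = (A.map Nat.cast) ^ m from
    Matrix.map_pow A (Nat.castRingHom ℝ) m]
  induction m with
  | zero => simp
  | succ m ih => rw [pow_succ', ← mulVec_mulVec, ih, mulVec_smul, h.2, smul_smul, pow_succ]

lemma PerronPair.submatrix [Fintype J] (h : PerronPair A lam x) (e : J ≃ I) :
    PerronPair (A.submatrix e e) lam (x ∘ e) := by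
  refine ⟨fun j => h.1 (e j), ?_⟩
  rw [← Matrix.submatrix_map, submatrix_mulVec_equiv, Function.comp_assoc, Equiv.self_comp_symm,
    Function.comp_id, h.2]
  rfl

end PerronPair

section Primitive

variable {I : Type*} [Fintype I] {A : Matrix I I ℕ}

lemma mul_le_mul_apply {B C : Matrix I I ℕ} {a b : ℕ} {i l j : I} (hB : a ≤ B i l)
    (hC : b ≤ C l j) : a * b ≤ (B * C) i j := by
  rw [mul_apply]
  exact (Nat.mul_le_mul hB hC).trans
    (single_le_sum (f := fun l => B i l * C l j) (fun _ _ => Nat.zero_le _) (mem_univ l))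

lemma card_le_mul_apply {B C : Matrix I I ℕ} (hB : ∀ i j, 0 < B i j) (hC : ∀ i j, 0 < C i j)
    (i j : I) : Fintype.card I ≤ (B * C) i j := by
  rw [mul_apply, Fintype.card_eq_sum_ones]
  exact sum_le_sum fun l _ => Nat.one_le_iff_ne_zero.2 (Nat.mul_pos (hB i l) (hC l j)).ne'

variable [DecidableEq I] {lam : ℝ} {x : I → ℝ}

lemma matPrimitive_of_pos (h : ∀ i j, 0 < A i j) : MatPrimitive A :=
  ⟨1, one_pos, by simpa using h⟩

lemma pow_le_pow_apply_of_le {B : Matrix I I ℕ} {a : ℕ} (h : ∀ i j, a ≤ B i j) (k : ℕ)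
    (i j : I) : a ^ (k + 1) ≤ (B ^ (k + 1)) i j := by
  induction k generalizing i j with
  | zero => simpa using h i j
  | succ k ih => rw [pow_succ, pow_succ]; exact mul_le_mul_apply (ih i i) (h i j)

lemma MatPrimitive.exists_pow_two_le (hA : MatPrimitive A) (hpf : PerronPair A lam x)
    (hlam : 1 < lam) :
    ∃ m, 0 < m ∧ ∀ i j, 2 ≤ (A ^ m) i j := by
  obtain ⟨k, hk, hpos⟩ := hA
  rcases Nat.lt_or_ge 1 (Fintype.card I) with hcard | hcard
  · refine ⟨k + k, by omega, fun i j => ?_⟩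
    rw [pow_add]
    exact hcard.trans_le (card_le_mul_apply hpos hpos i j)
  · -- on a single state, `A` is the `1 × 1` matrix `(λ)`
    have : Subsingleton I := Fintype.card_le_one_iff_subsingleton.1 hcard
    refine ⟨1, one_pos, fun i j => ?_⟩
    have hAi := sum_mul_eq_of_mulVec_eq_smul hpf.2 i
    rw [Fintype.sum_subsingleton _ i] at hAi
    have : (1 : ℝ) < A i i := (mul_right_cancel₀ (hpf.1 i).ne' hAi).symm ▸ hlam
    rw [pow_one, Subsingleton.elim j i]
    exact_mod_cast this

lemma MatPrimitive.exists_pow_le (hA : MatPrimitive A) (hpf : PerronPair A lam x)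
    (hlam : 1 < lam) (N : ℕ) :
    ∃ m, 0 < m ∧ ∀ i j, N ≤ (A ^ m) i j := by
  obtain ⟨m, hm, htwo⟩ := hA.exists_pow_two_le hpf hlam
  refine ⟨m * (N + 1), by positivity, fun i j => ?_⟩
  rw [pow_mul]
  calc N ≤ 2 ^ N := Nat.lt_two_pow_self.le
    _ ≤ 2 ^ (N + 1) := Nat.pow_le_pow_right two_pos N.le_succ
    _ ≤ ((A ^ m) ^ (N + 1)) i j := pow_le_pow_apply_of_le htwo N i j

end Primitive

section Splitting

variable {I J : Type*} [Fintype I]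

/-- `R` out-splits the states of `C` along `π`, in the sense of symbolic dynamics. -/
def IsRowSplitting [Fintype J] [DecidableEq I] (C : Matrix I I ℕ) (R : J → I → ℕ)
    (π : J → I) : Prop :=
  ∀ i k, ∑ a with π a = i, R a k = C i k

def splitMatrix (R : J → I → ℕ) (π : J → I) : Matrix J J ℕ :=
  Matrix.of fun a b => R a (π b)

noncomputable def splitVector (R : J → I → ℕ) (μ : ℝ) (x : I → ℝ) : J → ℝ :=
  fun a => (∑ k, (R a k : ℝ) * x k) / μ

variable {R : J → I → ℕ} {π : J → I} {C : Matrix I I ℕ} {μ : ℝ} {x : I → ℝ}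

lemma mul_splitVector (hμ : μ ≠ 0) (a : J) :
    μ * splitVector R μ x a = ∑ k, (R a k : ℝ) * x k :=
  mul_div_cancel₀ _ hμ

variable [Fintype J] [DecidableEq I]

lemma sum_fiber_splitVector (hC : C.map (Nat.cast : ℕ → ℝ) *ᵥ x = μ • x) (hμ : μ ≠ 0)
    (hsplit : IsRowSplitting C R π) (i : I) :
    ∑ a with π a = i, splitVector R μ x a = x i := by
  have hsum : ∑ a with π a = i, ∑ k, (R a k : ℝ) * x k = μ * x i := by
    rw [sum_comm, ← sum_mul_eq_of_mulVec_eq_smul hC i]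
    refine sum_congr rfl fun k _ => ?_
    rw [← sum_mul, ← hsplit i k, Nat.cast_sum]
  simp only [splitVector, ← sum_div, hsum, mul_div_cancel_left₀ _ hμ]

lemma splitMatrix_mulVec_splitVector (hC : C.map (Nat.cast : ℕ → ℝ) *ᵥ x = μ • x)
    (hμ : μ ≠ 0) (hsplit : IsRowSplitting C R π) :
    (splitMatrix R π).map (Nat.cast : ℕ → ℝ) *ᵥ splitVector R μ x =
      μ • splitVector R μ x := by
  ext a
  simp only [mulVec, dotProduct, map_apply, splitMatrix, of_apply, Pi.smul_apply, smul_eq_mul,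
    mul_splitVector hμ, ← sum_fiberwise univ π]
  refine sum_congr rfl fun i _ => ?_
  rw [← sum_fiber_splitVector hC hμ hsplit i, mul_sum]
  exact sum_congr rfl fun b hb => by rw [(mem_filter.1 hb).2]

lemma sum_splitVector (hC : C.map (Nat.cast : ℕ → ℝ) *ᵥ x = μ • x) (hμ : μ ≠ 0)
    (hsplit : IsRowSplitting C R π) :
    ∑ a, splitVector R μ x a = ∑ i, x i := by
  rw [← sum_fiberwise univ π]
  exact sum_congr rfl fun i _ => sum_fiber_splitVector hC hμ hsplit i

lemma Sval_splitVector (hC : C.map (Nat.cast : ℕ → ℝ) *ᵥ x = μ • x) (hμ : μ ≠ 0)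
    (hsplit : IsRowSplitting C R π) :
    Sval μ (splitVector R μ x) = Sval μ x := by
  refine (Sval_subset_of_mul_mem hμ fun z hz => ?_).antisymm (Sval_mono ?_)
  · refine mul_mem_Hgroup_of_forall_mul_mem (fun a => ?_) hz
    rw [mul_splitVector hμ]
    exact sum_natCast_mul_mem_Hgroup x (R a)
  · refine Hgroup_subset_of_forall_mem fun i => ?_
    rw [← sum_fiber_splitVector hC hμ hsplit i]
    exact AddSubgroup.sum_mem _ fun a _ => mem_Hgroup _ a

lemma PerronPair.split (h : PerronPair C μ x) (hμ : 0 < μ) (hR : ∀ a, ∃ k, 0 < R a k)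
    (hsplit : IsRowSplitting C R π) :
    PerronPair (splitMatrix R π) μ (splitVector R μ x) := by
  refine ⟨fun a => div_pos ?_ hμ, splitMatrix_mulVec_splitVector h.2 hμ.ne' hsplit⟩
  obtain ⟨k, hk⟩ := hR a
  exact sum_pos' (fun k _ => by have := h.1 k; positivity)
    ⟨k, mem_univ k, mul_pos (Nat.cast_pos.2 hk) (h.1 k)⟩

end Splitting

section SplitOff

def splitOffRows {I : Type*} [DecidableEq I] (C : Matrix I I ℕ) (i₀ : I) (T : Type*)
    [Fintype T] : I ⊕ T → I → ℕ :=
  Sum.elim (fun i k => C i k - if i = i₀ then Fintype.card T else 0) fun _ _ => 1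

variable {I T : Type*} [DecidableEq I] [Fintype T] {C : Matrix I I ℕ} {i₀ : I}

lemma isRowSplitting_splitOffRows [Fintype I] (h : ∀ k, Fintype.card T ≤ C i₀ k) :
    IsRowSplitting C (splitOffRows C i₀ T) (Sum.elim id fun _ => i₀) := by
  intro i k
  rw [sum_filter, Fintype.sum_sum_type]
  show (∑ j : I, if j = i then C j k - (if j = i₀ then Fintype.card T else 0) else 0) +
    ∑ _t : T, (if i₀ = i then 1 else 0) = C i k
  rw [Fintype.sum_ite_eq']
  by_cases hi : i = i₀
  · subst hi
    simp [h k]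
  · simp [hi, Ne.symm hi]

lemma splitOffRows_pos (h : ∀ i k, Fintype.card T < C i k) (a : I ⊕ T) (k : I) :
    0 < splitOffRows C i₀ T a k := by
  rcases a with i | t
  · have := h i k
    simp only [splitOffRows, Sum.elim_inl]
    split_ifs <;> omega
  · exact one_pos

end SplitOff

/-- for a primitive matrix `A` with Perron eigenvalue `λ > 1`, there are
primitive matrices of every larger size with the same clopen values set `S(A)`. -/
theorem exists_primitive_matrix_same_Sval_larger_size
    {s : ℕ} (A : Matrix (Fin s) (Fin s) ℕ) (lam : ℝ) (x : Fin s → ℝ)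
    (hprim : MatPrimitive A) (hpf : PerronPair A lam x)
    (hsum : ∑ i, x i = 1) (hlam : 1 < lam) :
    ∀ n : ℕ, 1 ≤ n → ∃ B : Matrix (Fin (s + n)) (Fin (s + n)) ℕ,
      MatPrimitive B ∧ ∃ (mu : ℝ) (y : Fin (s + n) → ℝ),
        PerronPair B mu y ∧ ∑ i, y i = 1 ∧ Sval mu y = Sval lam x := by
  intro n _
  obtain ⟨i₀⟩ : Nonempty (Fin s) :=
    univ_nonempty_iff.1 (nonempty_of_sum_ne_zero (hsum ▸ one_ne_zero))
  obtain ⟨m, hm, hge⟩ := hprim.exists_pow_le hpf hlam (n + 1)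
  set R := splitOffRows (A ^ m) i₀ (Fin n)
  have hR : ∀ a k, 0 < R a k := splitOffRows_pos fun i k => by simpa using hge i k
  have hsplit : IsRowSplitting (A ^ m) R (Sum.elim id fun _ => i₀) :=
    isRowSplitting_splitOffRows fun k => by simpa using Nat.le_of_succ_le (hge i₀ k)
  have hpfm := hpf.pow m
  have hlamm : 0 < lam ^ m := pow_pos (zero_lt_one.trans hlam) m
  let e : Fin (s + n) ≃ Fin s ⊕ Fin n := finSumFinEquiv.symm
  refine ⟨(splitMatrix R (Sum.elim id fun _ => i₀)).submatrix e e,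
    matPrimitive_of_pos fun _ _ => hR _ _, lam ^ m, splitVector R (lam ^ m) x ∘ e,
    (hpfm.split hlamm (fun a => ⟨i₀, hR a i₀⟩) hsplit).submatrix e, ?_, ?_⟩
  · exact (e.sum_comp _).trans ((sum_splitVector hpfm.2 hlamm.ne' hsplit).trans hsum)
  · rw [Sval_comp_of_surjective e.surjective, Sval_splitVector hpfm.2 hlamm.ne' hsplit,
      Sval_pow (zero_lt_one.trans hlam).ne' (fun _ => hpf.mul_mem_Hgroup) hm]
end

section
/- Let A be a primitive s×s matrix with nonnegative integer entries, with Perron–Frobenius eigenvalue λ > 1 and normalized positive eigenvector x = (x₁,…,x_s)ᵀ, Σᵢ xᵢ = 1. Then there exist k ∈ ℕ and a primitive (s+1)×(s+1) matrix A₁ with nonnegative integer entries such that A₁y = λᵏy, where y = (x₁,…,x_s, λ−1)ᵀ. Moreover, the additive subgroup of ℝ generated by the entries of y equals H(x), and S(A₁) = S(A). -/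
/-!
Let `c` be the vector of column sums of `A`. Summing `A x = λ x` gives `c ⬝ x = λ`, so
`λ - 1 = e ⬝ x` with `e = c - 1 ≥ 0` (no column of a primitive matrix vanishes). The entries
of `Aᵏ` grow like `λᵏ`, so for large `k` the matrix `P = Aᵏ` dominates `e` entrywise, and the
natural-number matrix `[[P - 1 eᵀ, 1], [eᵀ P, 0]]` has eigenvector `(x, λ - 1)` for `λᵏ`; its
square is positive. As `λ - 1 ∈ H(x)`, the group does not change, and as `λ H(x) ⊆ H(x)`, the
sets `λ⁻ᴺ H(x)` increase with `N`, so `S` only sees the cofinal exponents `kN + 1`.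
-/

open Matrix

open Filter

section Hgroup

variable {ι κ : Type*}

lemma natCast_dotProduct_mem_Hgroup [Fintype ι] (v : ι → ℕ) (x : ι → ℝ) :
    (fun i => (v i : ℝ)) ⬝ᵥ x ∈ Hgroup x :=
  AddSubgroup.sum_mem _ fun i _ => by
    rw [← nsmul_eq_mul]
    exact AddSubgroup.nsmul_mem _ (AddSubgroup.subset_closure (Set.mem_range_self i)) _

lemma Hgroup_snoc {n : ℕ} {x : Fin n → ℝ} {a : ℝ} (ha : a ∈ Hgroup x) :
    Hgroup (Fin.snoc x a : Fin (n + 1) → ℝ) = Hgroup x := by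
  unfold Hgroup
  rw [Fin.range_snoc]
  congr 1
  exact le_antisymm
    (AddSubgroup.closure_le _ |>.2 (Set.insert_subset ha AddSubgroup.subset_closure))
    (AddSubgroup.closure_mono (Set.subset_insert _ _))

lemma mem_Hgroup_div_iff {x : κ → ℝ} {c z : ℝ} (hc : c ≠ 0) :
    z ∈ Hgroup (fun i => x i / c) ↔ c * z ∈ Hgroup x := by
  have hrange : Set.range (fun i => x i / c) = AddMonoidHom.mulRight c⁻¹ '' Set.range x := by
    rw [← Set.range_comp]
    rfl
  unfold Hgroup
  rw [hrange, ← AddMonoidHom.map_closure, SetLike.mem_coe, AddSubgroup.mem_map]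
  constructor
  · rintro ⟨w, hw, rfl⟩
    rwa [AddMonoidHom.mulRight_apply, mul_comm w, ← mul_assoc, mul_inv_cancel₀ hc, one_mul]
  · intro hz
    exact ⟨c * z, hz, by rw [AddMonoidHom.mulRight_apply]; field_simp⟩

lemma mem_Sval_iff {x : κ → ℝ} {lam z : ℝ} (hlam : lam ≠ 0) :
    z ∈ Sval lam x ↔ ∃ N : ℕ, lam ^ N * z ∈ Hgroup x := by
  constructor
  · rintro ⟨N, h, hh, rfl⟩
    exact ⟨N, by rwa [mul_div_cancel₀ _ (pow_ne_zero N hlam)]⟩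
  · rintro ⟨N, hN⟩
    exact ⟨N, _, hN, by field_simp⟩

lemma Sval_pow_div_eq {x : ι → ℝ} {y : κ → ℝ} {lam : ℝ} {k : ℕ} (hlam : lam ≠ 0)
    (hmul : ∀ z ∈ Hgroup x, lam * z ∈ Hgroup x) (hy : Hgroup y = Hgroup x) (hk : 0 < k) :
    Sval (lam ^ k) (fun i => y i / lam) = Sval lam x := by
  have hpow : ∀ {N M : ℕ} {z : ℝ}, N ≤ M → lam ^ N * z ∈ Hgroup x → lam ^ M * z ∈ Hgroup x := by
    intro N M z hNM hz
    obtain ⟨d, rfl⟩ := Nat.exists_eq_add_of_le hNM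
    induction d with
    | zero => exact hz
    | succ d ih =>
      rw [← add_assoc, pow_succ', mul_assoc]
      exact hmul _ (ih (by omega))
  ext z
  simp only [mem_Sval_iff hlam, mem_Sval_iff (pow_ne_zero k hlam), mem_Hgroup_div_iff hlam, hy,
    ← mul_assoc, ← pow_mul, ← pow_succ']
  constructor
  · rintro ⟨N, hN⟩
    exact ⟨_, hN⟩
  · rintro ⟨N, hN⟩
    exact ⟨N, hpow (by nlinarith) hN⟩

end Hgroup

section PrimitiveMatrix

variable {ι : Type*} [Fintype ι] {A : Matrix ι ι ℕ} {lam : ℝ} {x : ι → ℝ}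

namespace PerronPair

lemma pow_s3 [DecidableEq ι] (h : PerronPair A lam x) (m : ℕ) : PerronPair (A ^ m) (lam ^ m) x := by
  refine ⟨h.1, ?_⟩
  rw [show (A ^ m).map (Nat.cast : ℕ → ℝ) = A.map Nat.cast ^ m from
    Matrix.map_pow A (Nat.castRingHom ℝ) m]
  induction m with
  | zero => simp
  | succ m ih =>
    rw [pow_succ', ← mulVec_mulVec, ih, mulVec_smul, h.2, smul_smul, ← pow_succ]

lemma mul_mem_Hgroup_s3 (h : PerronPair A lam x) {z : ℝ} (hz : z ∈ Hgroup x) :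
    lam * z ∈ Hgroup x := by
  unfold Hgroup at hz ⊢
  rw [SetLike.mem_coe] at hz ⊢
  induction hz using AddSubgroup.closure_induction with
  | mem _ hw =>
    obtain ⟨i, rfl⟩ := hw
    rw [← smul_eq_mul, ← Pi.smul_apply, ← h.2]
    exact natCast_dotProduct_mem_Hgroup (A i) x
  | zero => simp
  | add _ _ _ _ hv hw => simpa [mul_add] using AddSubgroup.add_mem _ hv hw
  | neg _ _ hw => simpa using AddSubgroup.neg_mem _ hw

lemma le_pow_add [DecidableEq ι] (h : PerronPair A lam x) (hx : ∀ i, x i ≤ 1) {n : ℕ}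
    (hn : ∀ i j, 0 < (A ^ n) i j) (m : ℕ) (i j : ι) :
    lam ^ m * x i ≤ (A ^ (m + n)) i j := by
  calc lam ^ m * x i = ∑ l, ((A ^ m) i l : ℝ) * x l := by
        simpa [mulVec, dotProduct] using (congrFun (h.pow_s3 m).2 i).symm
    _ ≤ ∑ l, ((A ^ m) i l : ℝ) :=
        Finset.sum_le_sum fun l _ => mul_le_of_le_one_right (Nat.cast_nonneg _) (hx l)
    _ ≤ ((∑ l, (A ^ m) i l * (A ^ n) l j : ℕ) : ℝ) := by
        exact_mod_cast Finset.sum_le_sum fun l _ => Nat.le_mul_of_pos_right _ (hn l j)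
    _ = (A ^ (m + n)) i j := by rw [pow_add, mul_apply]

lemma colSum_dotProduct (h : PerronPair A lam x) :
    (fun j => ((∑ i, A i j : ℕ) : ℝ)) ⬝ᵥ x = lam * ∑ i, x i := by
  have hrow : ∀ i, ∑ j, (A i j : ℝ) * x j = lam * x i := fun i => by
    simpa [mulVec, dotProduct] using congrFun h.2 i
  simp only [dotProduct, Nat.cast_sum, Finset.sum_mul, Finset.mul_sum]
  rw [Finset.sum_comm]
  exact Finset.sum_congr rfl fun i _ => hrow i

end PerronPair

namespace MatPrimitive

lemma colSum_pos [DecidableEq ι] (hA : MatPrimitive A) (j : ι) : 0 < ∑ i, A i j := by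
  obtain ⟨n, hn, hpos⟩ := hA
  obtain ⟨m, rfl⟩ : ∃ m, n = m + 1 := ⟨n - 1, by omega⟩
  by_contra h0
  have hcol : ∀ i, A i j = 0 := by simpa using h0
  simpa [pow_succ, mul_apply, hcol] using hpos j j

lemma exists_pow_gt [DecidableEq ι] (hA : MatPrimitive A) (h : PerronPair A lam x)
    (hx : ∀ i, x i ≤ 1) (hlam : 1 < lam) (b : ι → ℕ) : ∃ k, 0 < k ∧ ∀ i j, b j < (A ^ k) i j := by
  obtain ⟨n, hn, hpos⟩ := hA
  have hlarge : ∀ᶠ m in atTop, ∀ i j, (b j : ℝ) < lam ^ m * x i :=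
    eventually_all.2 fun i => eventually_all.2 fun j =>
      ((tendsto_pow_atTop_atTop_of_one_lt hlam).atTop_mul_const (h.1 i)).eventually_gt_atTop _
  obtain ⟨m, hm⟩ := hlarge.exists
  exact ⟨m + n, by omega, fun i j => by
    exact_mod_cast (hm i j).trans_le (h.le_pow_add hx hpos m i j)⟩

lemma colSum_sub_one_dotProduct [DecidableEq ι] (hA : MatPrimitive A) (h : PerronPair A lam x)
    (hsum : ∑ i, x i = 1) : (fun j => ((∑ i, A i j - 1 : ℕ) : ℝ)) ⬝ᵥ x = lam - 1 := by
  have hcol := h.colSum_dotProduct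
  simp only [dotProduct, hsum, mul_one] at hcol ⊢
  simp only [Nat.cast_sub (hA.colSum_pos _), Nat.cast_one, sub_mul, one_mul,
    Finset.sum_sub_distrib, hsum, hcol]

end MatPrimitive

lemma matPrimitive_of_pos_row_col [DecidableEq ι] (B : Matrix ι ι ℕ) (q : ι)
    (hrow : ∀ j, 0 < B q j) (hcol : ∀ i, 0 < B i q) : MatPrimitive B :=
  ⟨2, two_pos, fun i j => by
    rw [sq, mul_apply]
    exact Finset.sum_pos' (fun _ _ => Nat.zero_le _)
      ⟨q, Finset.mem_univ _, Nat.mul_pos (hcol i) (hrow j)⟩⟩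

end PrimitiveMatrix

section AddVertex

variable {s : ℕ}

/-- The block matrix `[[P - 1 eᵀ, 1], [eᵀ P, 0]]`: if `P x = μ x` and `e ⬝ x = a`, then
`(x, a)` is a `μ`-eigenvector of it. -/
def addVertex (P : Matrix (Fin s) (Fin s) ℕ) (e : Fin s → ℕ) :
    Matrix (Fin (s + 1)) (Fin (s + 1)) ℕ :=
  Matrix.of fun i j =>
    Fin.lastCases (Fin.lastCases 0 (fun j => (e ᵥ* P) j) j)
      (fun i => Fin.lastCases 1 (fun j => P i j - e j) j) i

variable (P : Matrix (Fin s) (Fin s) ℕ) (e : Fin s → ℕ)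

@[simp] lemma addVertex_castSucc_castSucc (i j : Fin s) :
    addVertex P e i.castSucc j.castSucc = P i j - e j := by simp [addVertex]

@[simp] lemma addVertex_castSucc_last (i : Fin s) :
    addVertex P e i.castSucc (Fin.last s) = 1 := by simp [addVertex]

@[simp] lemma addVertex_last_castSucc (j : Fin s) :
    addVertex P e (Fin.last s) j.castSucc = ∑ i, e i * P i j := by
  simp [addVertex, vecMul, dotProduct]

@[simp] lemma addVertex_last_last : addVertex P e (Fin.last s) (Fin.last s) = 0 := by
  simp [addVertex]

lemma addVertex_mulVec {x : Fin s → ℝ} {μ a : ℝ} (hP : P.map (Nat.cast : ℕ → ℝ) *ᵥ x = μ • x)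
    (hle : ∀ i j, e j ≤ P i j) (he : (fun j => (e j : ℝ)) ⬝ᵥ x = a) :
    (addVertex P e).map (Nat.cast : ℕ → ℝ) *ᵥ Fin.snoc x a = μ • Fin.snoc x a := by
  have hrow : ∀ i, ∑ j, (P i j : ℝ) * x j = μ * x i := fun i => by
    simpa [mulVec, dotProduct] using congrFun hP i
  simp only [dotProduct] at he
  funext i
  induction i using Fin.lastCases with
  | last =>
    simp only [mulVec, dotProduct, Fin.sum_univ_castSucc, map_apply, addVertex_last_castSucc,
      addVertex_last_last, Fin.snoc_castSucc, Fin.snoc_last, Pi.smul_apply, smul_eq_mul]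
    push_cast
    rw [zero_mul, add_zero]
    calc ∑ j, (∑ i, (e i : ℝ) * P i j) * x j = ∑ i, (e i : ℝ) * ∑ j, (P i j : ℝ) * x j := by
          simp only [Finset.sum_mul, Finset.mul_sum, mul_assoc]
          exact Finset.sum_comm
      _ = μ * a := by simp only [hrow, mul_left_comm _ μ, ← Finset.mul_sum, he]
  | cast i =>
    simp only [mulVec, dotProduct, Fin.sum_univ_castSucc, map_apply, addVertex_castSucc_castSucc,
      addVertex_castSucc_last, Fin.snoc_castSucc, Fin.snoc_last, Pi.smul_apply, smul_eq_mul,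
      Nat.cast_sub (hle i _), sub_mul, Finset.sum_sub_distrib, hrow, he]
    push_cast
    ring

lemma addVertex_primitive (hlt : ∀ i j, e j < P i j) (he : e ≠ 0) :
    MatPrimitive (addVertex P e) := by
  obtain ⟨q, hq⟩ := Function.ne_iff.1 he
  have hlast : ∀ j, 0 < ∑ i, e i * P i j := fun j =>
    Finset.sum_pos' (fun _ _ => Nat.zero_le _)
      ⟨q, Finset.mem_univ _, Nat.mul_pos (Nat.pos_of_ne_zero hq) (Nat.zero_lt_of_lt (hlt q j))⟩
  refine matPrimitive_of_pos_row_col _ q.castSucc (fun j => ?_) (fun i => ?_)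
  · induction j using Fin.lastCases <;> simp [hlt]
  · induction i using Fin.lastCases <;> simp [hlt, hlast]

end AddVertex

/-- one-step enlargement: there are `k ∈ ℕ` and a primitive
`(s+1)×(s+1)` matrix `A₁` with `A₁ y = λᵏ y` for `y = (x₁,…,x_s, λ-1)ᵀ`; the group
generated by the entries of `y` is `H(x)`, and `S(A₁) = S(A)`. -/
theorem exists_primitive_matrix_one_more_vertex
    {s : ℕ} (A : Matrix (Fin s) (Fin s) ℕ) (lam : ℝ) (x : Fin s → ℝ)
    (hprim : MatPrimitive A) (hpf : PerronPair A lam x)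
    (hsum : ∑ i, x i = 1) (hlam : 1 < lam)
    (y : Fin (s + 1) → ℝ) (hy : y = Fin.snoc x (lam - 1)) :
    ∃ (k : ℕ) (A₁ : Matrix (Fin (s + 1)) (Fin (s + 1)) ℕ), 0 < k ∧
      MatPrimitive A₁ ∧
      (A₁.map (Nat.cast : ℕ → ℝ)) *ᵥ y = lam ^ k • y ∧
      Hgroup y = Hgroup x ∧
      Sval (lam ^ k) (fun i => y i / ∑ j, y j) = Sval lam x := by
  set e : Fin s → ℕ := fun j => ∑ i, A i j - 1
  have hex : (fun j => (e j : ℝ)) ⬝ᵥ x = lam - 1 := hprim.colSum_sub_one_dotProduct hpf hsum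
  have he : e ≠ 0 := by
    rintro h0
    simp [h0] at hex
    linarith
  have hx : ∀ i, x i ≤ 1 := fun i =>
    hsum ▸ Finset.single_le_sum (fun j _ => (hpf.1 j).le) (Finset.mem_univ i)
  obtain ⟨k, hk, hAk⟩ := hprim.exists_pow_gt hpf hx hlam e
  have hHy : Hgroup y = Hgroup x := hy ▸ Hgroup_snoc (hex ▸ natCast_dotProduct_mem_Hgroup e x)
  have hysum : ∑ j, y j = lam := by
    simp [hy, Fin.sum_univ_castSucc, hsum]
  refine ⟨k, addVertex (A ^ k) e, hk, addVertex_primitive _ _ hAk he, ?_, hHy, ?_⟩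
  · rw [hy]
    exact addVertex_mulVec _ _ (hpf.pow_s3 k).2 (fun i j => (hAk i j).le) hex
  · rw [hysum]
    exact Sval_pow_div_eq (by positivity) (fun _ => hpf.mul_mem_Hgroup_s3) hHy hk
end

section
/- Let A be a primitive s×s matrix with nonnegative integer entries, λ its Perron–Frobenius eigenvalue, and x = (x₁,…,x_s)ᵀ the strictly positive eigenvector normalized by Σᵢ xᵢ = 1. Then each xᵢ belongs to the field ℚ(λ), and the ℚ-vector subspace of ℝ spanned by x₁,…,x_s has dimension equal to deg λ, the degree of λ over ℚ. -/
open Matrix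

/-!
Over `K = ℚ(λ)` the matrix `A - λ` is singular, so it has a nonzero kernel vector with entries
in `K`; by geometric simplicity of the Perron eigenvalue this vector is a multiple of `x`, and
`∑ xᵢ = 1` forces the multiple into `K`, so `xᵢ ∈ K`. Conversely the `ℚ`-span of the `xᵢ` is
stable under multiplication by `λ`, because `λ xᵢ = ∑ⱼ Aᵢⱼ xⱼ`, and contains `∑ xᵢ = 1`, hence
contains every power of `λ` and thus all of `K`. So the span is `K`, of dimension `deg λ`.
-/

open IntermediateField Submodule

namespace Matrix

variable {ι : Type*} [Fintype ι]

theorem pow_mulVec_eq_pow_smul [DecidableEq ι] {R : Type*} [CommSemiring R] {M : Matrix ι ι R}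
    {μ : R} {v : ι → R} (hv : M *ᵥ v = μ • v) (n : ℕ) : (M ^ n) *ᵥ v = μ ^ n • v := by
  induction n with
  | zero => simp
  | succ n ih => rw [pow_succ, ← mulVec_mulVec, hv, mulVec_smul, ih, smul_smul, pow_succ']

theorem eq_zero_of_mulVec_eq_smul_of_apply_eq_zero {P : Matrix ι ι ℝ} (hP : ∀ i j, 0 < P i j)
    {μ : ℝ} {z : ι → ℝ} (hz : 0 ≤ z) (hPz : P *ᵥ z = μ • z) {i : ι} (hi : z i = 0) :
    z = 0 := by
  by_contra hne
  obtain ⟨j, hj⟩ := Function.ne_iff.mp hne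
  have hpos : 0 < (P *ᵥ z) i :=
    Finset.sum_pos' (fun k _ => mul_nonneg (hP i k).le (hz k))
      ⟨j, Finset.mem_univ j, mul_pos (hP i j) ((hz j).lt_of_ne (Ne.symm hj))⟩
  simp [hPz, hi] at hpos

theorem exists_mulVec_eq_smul_of_map [DecidableEq ι] {K L : Type*} [Field K] [Field L]
    (f : K →+* L) (M : Matrix ι ι K) (μ : K) {v : ι → L} (hv : v ≠ 0)
    (h : M.map f *ᵥ v = f μ • v) : ∃ w ≠ 0, M *ᵥ w = μ • w := by
  have hdet : (M - μ • 1).det = 0 := by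
    apply f.injective
    rw [map_zero, f.map_det, ← exists_mulVec_eq_zero_iff]
    refine ⟨v, hv, ?_⟩
    rw [f.mapMatrix_apply, Matrix.map_sub _ (map_sub f), map_smul' _ _ _ (map_mul f),
      Matrix.map_one _ (map_zero f) (map_one f), sub_mulVec, h, smul_mulVec, one_mulVec,
      sub_self]
  obtain ⟨w, hw, hMw⟩ := exists_mulVec_eq_zero_iff.mpr hdet
  exact ⟨w, hw, by rwa [sub_mulVec, smul_mulVec, one_mulVec, sub_eq_zero] at hMw⟩

end Matrix

section Perron

open Matrix

variable {ι : Type*} [Fintype ι] {A : Matrix ι ι ℕ} {lam : ℝ} {x : ι → ℝ}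

theorem MatPrimitive.exists_eq_smul_of_mulVec_eq_smul [DecidableEq ι] (hA : MatPrimitive A)
    (hx : PerronPair A lam x) {u : ι → ℝ} (hu : A.map (Nat.cast : ℕ → ℝ) *ᵥ u = lam • u) :
    ∃ t : ℝ, u = t • x := by
  obtain ⟨n, -, hpos⟩ := hA
  obtain ⟨hxpos, hxeig⟩ := hx
  cases isEmpty_or_nonempty ι
  · exact ⟨0, Subsingleton.elim _ _⟩
  obtain ⟨i, -, hi⟩ :=
    Finset.exists_max_image Finset.univ (fun i => u i / x i) Finset.univ_nonempty
  -- with the largest ratio `t = u i / x i`, the vector `t • x - u` is a nonnegative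
  -- eigenvector with a zero entry
  refine ⟨u i / x i, (sub_eq_zero.mp ?_).symm⟩
  have hpow : (A ^ n).map (Nat.cast : ℕ → ℝ) = A.map Nat.cast ^ n :=
    map_pow (Nat.castRingHom ℝ).mapMatrix A n
  refine eq_zero_of_mulVec_eq_smul_of_apply_eq_zero (P := (A ^ n).map Nat.cast) (μ := lam ^ n)
    (i := i) (fun j k => by simpa using hpos j k) (fun j => ?_) ?_ ?_
  · simpa using (div_le_iff₀ (hxpos j)).mp (hi j (Finset.mem_univ j))
  · rw [hpow]
    exact pow_mulVec_eq_pow_smul (by rw [mulVec_sub, mulVec_smul, hxeig, hu, smul_sub, smul_comm]) n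
  · simp [div_mul_cancel₀ _ (hxpos i).ne']

theorem mul_mem_span_range_of_mulVec_eq_smul (hx : A.map (Nat.cast : ℕ → ℝ) *ᵥ x = lam • x)
    {w : ℝ} (hw : w ∈ span ℚ (Set.range x)) : lam * w ∈ span ℚ (Set.range x) := by
  have hle : span ℚ (Set.range x) ≤ (span ℚ (Set.range x)).comap (LinearMap.mulLeft ℚ lam) := by
    rw [span_le]
    rintro _ ⟨i, rfl⟩
    have hrow : lam * x i = ∑ j, A i j • x j := by
      simpa [mulVec, dotProduct, nsmul_eq_mul] using (congrFun hx i).symm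
    rw [SetLike.mem_coe, mem_comap, LinearMap.mulLeft_apply, hrow]
    exact sum_mem fun j _ => smul_of_tower_mem _ _ (subset_span ⟨j, rfl⟩)
  exact hle hw

theorem pow_mem_span_range_of_mulVec_eq_smul (hx : A.map (Nat.cast : ℕ → ℝ) *ᵥ x = lam • x)
    (hsum : ∑ i, x i = 1) (n : ℕ) : lam ^ n ∈ span ℚ (Set.range x) := by
  induction n with
  | zero => exact pow_zero lam ▸ hsum ▸ sum_mem fun i _ => subset_span ⟨i, rfl⟩
  | succ n ih => exact pow_succ' lam n ▸ mul_mem_span_range_of_mulVec_eq_smul hx ih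

theorem isIntegral_of_mulVec_eq_smul (hx : A.map (Nat.cast : ℕ → ℝ) *ᵥ x = lam • x)
    (hsum : ∑ i, x i = 1) : IsIntegral ℚ lam :=
  isIntegral_of_smul_mem_submodule (span ℚ (Set.range x))
    ((Submodule.ne_bot_iff _).mpr ⟨1, pow_zero lam ▸ pow_mem_span_range_of_mulVec_eq_smul hx hsum 0,
      one_ne_zero⟩)
    (fg_span (Set.finite_range x)) lam fun _ hw => mul_mem_span_range_of_mulVec_eq_smul hx hw

theorem adjoin_le_span_range_of_mulVec_eq_smul (hx : A.map (Nat.cast : ℕ → ℝ) *ᵥ x = lam • x)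
    (hsum : ∑ i, x i = 1) :
    Subalgebra.toSubmodule ℚ⟮lam⟯.toSubalgebra ≤ span ℚ (Set.range x) := by
  rw [adjoin_simple_toSubalgebra_of_isAlgebraic (isIntegral_of_mulVec_eq_smul hx hsum).isAlgebraic,
    Algebra.adjoin_eq_span, span_le]
  intro y hy
  obtain ⟨n, rfl⟩ := Submonoid.mem_closure_singleton.mp hy
  exact pow_mem_span_range_of_mulVec_eq_smul hx hsum n

theorem MatPrimitive.perronPair_apply_mem_adjoin [DecidableEq ι] (hA : MatPrimitive A)
    (hx : PerronPair A lam x) (hsum : ∑ i, x i = 1) (i : ι) : x i ∈ ℚ⟮lam⟯ := by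
  set f := algebraMap ℚ⟮lam⟯ ℝ
  have hmap : (A.map (Nat.cast : ℕ → ℚ⟮lam⟯)).map f = A.map Nat.cast := by
    ext; simp
  have hx0 : x ≠ 0 := by
    rintro rfl
    simp at hsum
  obtain ⟨w, hw0, hw⟩ := exists_mulVec_eq_smul_of_map f (A.map Nat.cast) (AdjoinSimple.gen ℚ lam)
    hx0 (by rw [hmap, AdjoinSimple.algebraMap_gen]; exact hx.2)
  obtain ⟨t, hwt⟩ := hA.exists_eq_smul_of_mulVec_eq_smul hx (u := f ∘ w) <| funext fun j => by
    rw [← hmap, ← f.map_mulVec, hw]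
    simp [f]
  have ht : t = ∑ j, f (w j) := by
    rw [← mul_one t, ← hsum, Finset.mul_sum]
    exact Finset.sum_congr rfl fun j _ => (congrFun hwt j).symm
  have ht0 : t ≠ 0 := by
    rintro rfl
    exact hw0 <| funext fun j => f.injective <| by simpa using congrFun hwt j
  have hxi : x i = t⁻¹ * f (w i) := by
    rw [show f (w i) = t * x i from congrFun hwt i, inv_mul_cancel_left₀ ht0]
  rw [hxi, ht]
  exact mul_mem (inv_mem (sum_mem fun j _ => (w j).2)) (w i).2

end Perron

/-- the entries of the normalized Perron eigenvector of a primitive matrix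
lie in `ℚ(λ)` and span a `ℚ`-subspace of `ℝ` of dimension `deg λ`. -/
theorem perron_eigenvector_entries_span
    {s : ℕ} (A : Matrix (Fin s) (Fin s) ℕ) (lam : ℝ) (x : Fin s → ℝ)
    (hprim : MatPrimitive A) (hpf : PerronPair A lam x) (hsum : ∑ i, x i = 1) :
    (∀ i, x i ∈ IntermediateField.adjoin ℚ ({lam} : Set ℝ)) ∧
    Module.finrank ℚ (Submodule.span ℚ (Set.range x)) = (minpoly ℚ lam).natDegree := by
  have hmem : ∀ i, x i ∈ ℚ⟮lam⟯ := hprim.perronPair_apply_mem_adjoin hpf hsum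
  have hspan : span ℚ (Set.range x) = Subalgebra.toSubmodule ℚ⟮lam⟯.toSubalgebra :=
    le_antisymm (span_le.mpr (Set.range_subset_iff.mpr hmem))
      (adjoin_le_span_range_of_mulVec_eq_smul hpf.2 hsum)
  refine ⟨hmem, ?_⟩
  rw [hspan, Subalgebra.finrank_toSubmodule]
  exact adjoin.finrank (isIntegral_of_mulVec_eq_smul hpf.2 hsum)
end

section
/- Let x₁,…,x_s be positive rational numbers with Σᵢ xᵢ = 1, and let H(x) be the additive subgroup of ℝ generated by x₁,…,x_s. Then the set Y = ⋃_{l∈ℕ} { (y₁,…,y_l) : y_j ∈ ℚ ∩ (0,∞), Σ_{j=1}^l y_j = 1, and the additive subgroup of ℝ generated by y₁,…,y_l equals H(x) } is finite. -/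
open Matrix

/-! Every generator `x i` lies in `(1/d)ℤ` for `d` the product of the denominators, hence so does
every entry of a tuple `y` generating the same group. Being positive and summing to `1`, the
entries are `k_j / d` with `(k_j)` a composition of `d`, and there are finitely many of those. -/

theorem List.finite_setOf_forall_pos_sum_eq (n : ℕ) :
    {l : List ℕ | (∀ a ∈ l, 0 < a) ∧ l.sum = n}.Finite :=
  (Set.finite_range (Composition.blocks (n := n))).subset fun l hl =>
    ⟨⟨l, hl.1 _, hl.2⟩, rfl⟩

theorem finite_setOf_list_sum_eq_one_of_forall_mul_eq_natCast {d : ℕ} (hd : d ≠ 0) :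
    {y : List ℚ | (∀ q ∈ y, 0 < q ∧ ∃ k : ℕ, q * d = k) ∧ y.sum = 1}.Finite := by
  refine ((List.finite_setOf_forall_pos_sum_eq d).image
    (List.map fun k : ℕ => (k : ℚ) / d)).subset ?_
  rintro y ⟨hy, hsum⟩
  have hfloor : ∀ q ∈ y, (⌊q * d⌋₊ : ℚ) = q * d := fun q hq => by
    obtain ⟨k, hk⟩ := (hy q hq).2
    rw [hk, Nat.floor_natCast]
  refine ⟨y.map fun q : ℚ => ⌊q * d⌋₊, ⟨?_, ?_⟩, ?_⟩
  · simp only [List.mem_map, forall_exists_index, and_imp]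
    rintro _ q hq rfl
    have hpos : (0 : ℚ) < ⌊q * d⌋₊ :=
      hfloor q hq ▸ mul_pos (hy q hq).1 (Nat.cast_pos.2 (Nat.pos_of_ne_zero hd))
    exact_mod_cast hpos
  · have hsum' : ((y.map fun q : ℚ => ⌊q * d⌋₊).sum : ℚ) = d := by
      rw [Nat.cast_list_sum, List.map_map, Function.comp_def, List.map_congr_left hfloor,
        List.sum_map_mul_right, List.map_id', hsum, one_mul]
    exact_mod_cast hsum'
  · rw [List.map_map]
    refine (List.map_congr_left fun q hq => ?_).trans (List.map_id y)
    simp [hfloor q hq, hd]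

theorem ratCast_mem_zmultiples_inv_of_den_dvd {K : Type*} [Field K] [CharZero K] {q : ℚ}
    {d : ℕ} (hd : d ≠ 0) (h : q.den ∣ d) : (q : K) ∈ AddSubgroup.zmultiples (d : K)⁻¹ := by
  obtain ⟨c, rfl⟩ := h
  have hc : (c : K) ≠ 0 := by exact_mod_cast right_ne_zero_of_mul hd
  refine ⟨q.num * c, ?_⟩
  simp only [zsmul_eq_mul]
  rw [Rat.cast_def]
  push_cast
  field_simp

theorem closure_range_ratCast_le_zmultiples {ι K : Type*} [Fintype ι] [Field K] [CharZero K]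
    (x : ι → ℚ) :
    AddSubgroup.closure (Set.range fun i => (x i : K)) ≤
      AddSubgroup.zmultiples ((∏ i, (x i).den : ℕ) : K)⁻¹ := by
  rw [AddSubgroup.closure_le]
  rintro _ ⟨i, rfl⟩
  exact ratCast_mem_zmultiples_inv_of_den_dvd
    (Finset.prod_ne_zero_iff.2 fun j _ => (x j).den_nz)
    (Finset.dvd_prod_of_mem _ (Finset.mem_univ i))

theorem exists_mul_eq_natCast_of_ratCast_mem_zmultiples_inv {K : Type*} [Field K] [CharZero K]
    {q : ℚ} {d : ℕ} (hd : d ≠ 0) (hq : 0 ≤ q)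
    (h : (q : K) ∈ AddSubgroup.zmultiples (d : K)⁻¹) :
    ∃ k : ℕ, q * d = k := by
  obtain ⟨k, hk⟩ := h
  simp only [zsmul_eq_mul] at hk
  have hk' : q * d = k := by
    have hK : ((q * d : ℚ) : K) = (k : K) := by
      push_cast
      rw [← hk]
      field_simp
    exact_mod_cast hK
  lift k to ℕ using by exact_mod_cast hk' ▸ mul_nonneg hq (Nat.cast_nonneg d)
  exact ⟨k, by exact_mod_cast hk'⟩

theorem finitely_many_rational_tuples_generating_H_general
    {s : ℕ} (x : Fin s → ℚ) :
    { y : List ℚ | (∀ q ∈ y, 0 < q) ∧ y.sum = 1 ∧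
        AddSubgroup.closure { r : ℝ | ∃ q ∈ y, (q : ℝ) = r } =
          AddSubgroup.closure (Set.range fun i => ((x i : ℝ))) }.Finite := by
  have hd : ∏ i, (x i).den ≠ 0 := Finset.prod_ne_zero_iff.2 fun i _ => (x i).den_nz
  refine (finite_setOf_list_sum_eq_one_of_forall_mul_eq_natCast hd).subset ?_
  rintro y ⟨hpos, hsum, hH⟩
  refine ⟨fun q hq => ⟨hpos q hq, ?_⟩, hsum⟩
  have hqH : (q : ℝ) ∈ AddSubgroup.closure (Set.range fun i => (x i : ℝ)) :=
    hH ▸ AddSubgroup.subset_closure ⟨q, hq, rfl⟩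
  exact exists_mul_eq_natCast_of_ratCast_mem_zmultiples_inv hd (hpos q hq).le
    (closure_range_ratCast_le_zmultiples x hqH)

/-- there are only finitely many tuples of positive rationals summing to `1`
that generate a given additive subgroup `H(x)` of `ℝ`. -/
theorem finitely_many_rational_tuples_generating_H
    {s : ℕ} (x : Fin s → ℚ) (hpos : ∀ i, 0 < x i) (hsum : ∑ i, x i = 1) :
    { y : List ℚ | (∀ q ∈ y, 0 < q) ∧ y.sum = 1 ∧
        AddSubgroup.closure { r : ℝ | ∃ q ∈ y, (q : ℝ) = r } =
          AddSubgroup.closure (Set.range fun i => ((x i : ℝ))) }.Finite :=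
  finitely_many_rational_tuples_generating_H_general x
end

section
/- Let λ be the unique real root of the polynomial f(t) = t³ + 3t² − 15t − 46 (one has λ ≈ 3.8916, f is irreducible over ℚ, and λ is a Perron number of degree 3). Then there is no 3×3 matrix with nonnegative integer entries that has λ as an eigenvalue. -/
open Matrix

/-!
The characteristic polynomial of a rational `n × n` matrix having an eigenvalue `λ` whose
minimal polynomial has degree `n` must be that minimal polynomial, because the latter divides
it. Here `t³ + 3t² - 15t - 46` has no rational root (an integer root would divide `46`), so it
is irreducible and is the minimal polynomial of `λ`. A `3 × 3` matrix with eigenvalue `λ` would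
therefore have trace `-3`, which a matrix with nonnegative entries cannot have.
-/

open Polynomial

namespace Matrix

variable {K L n : Type*} [Field K] [Field L] [Algebra K L] [Fintype n] [DecidableEq n]

theorem aeval_charpoly_eq_zero_of_mulVec_eq_smul {A : Matrix n n K} {μ : L} {v : n → L}
    (hv : v ≠ 0) (h : A.map (algebraMap K L) *ᵥ v = μ • v) : aeval μ A.charpoly = 0 := by
  have hker : (scalar n μ - A.map (algebraMap K L)) *ᵥ v = 0 := by
    rw [sub_mulVec, h, scalar_apply, ← smul_one_eq_diagonal, smul_mulVec, one_mulVec, sub_self]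
  rw [aeval_def, ← eval_map, ← charpoly_map, eval_charpoly]
  exact exists_mulVec_eq_zero_iff.mp ⟨v, hv, hker⟩

theorem charpoly_eq_minpoly_of_mulVec_eq_smul {A : Matrix n n K} {μ : L} {v : n → L}
    (hv : v ≠ 0) (h : A.map (algebraMap K L) *ᵥ v = μ • v)
    (hdeg : (minpoly K μ).natDegree = Fintype.card n) : A.charpoly = minpoly K μ := by
  have hroot := aeval_charpoly_eq_zero_of_mulVec_eq_smul hv h
  have hμ : IsIntegral K μ := ⟨A.charpoly, A.charpoly_monic, hroot⟩
  exact eq_of_monic_of_dvd_of_natDegree_le (minpoly.monic hμ) A.charpoly_monic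
    (minpoly.dvd K μ hroot) (by rw [charpoly_natDegree_eq_dim, hdeg])

theorem trace_eq_neg_nextCoeff_minpoly_of_mulVec_eq_smul {A : Matrix n n K} {μ : L}
    {v : n → L} (hv : v ≠ 0) (h : A.map (algebraMap K L) *ᵥ v = μ • v)
    (hdeg : (minpoly K μ).natDegree = Fintype.card n) :
    A.trace = -(minpoly K μ).nextCoeff := by
  rw [trace_eq_neg_charpoly_nextCoeff, charpoly_eq_minpoly_of_mulVec_eq_smul hv h hdeg]

end Matrix

noncomputable def perronCubic (R : Type*) [CommRing R] : R[X] :=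
  X ^ 3 + C 3 * X ^ 2 - C 15 * X - C 46

section perronCubic

variable (R : Type*) [CommRing R]

theorem aeval_perronCubic {A : Type*} [CommRing A] [Algebra R A] (x : A) :
    aeval x (perronCubic R) = x ^ 3 + 3 * x ^ 2 - 15 * x - 46 := by
  simp [perronCubic, map_ofNat]

theorem perronCubic_monic [Nontrivial R] : (perronCubic R).Monic := by
  unfold perronCubic; monicity!

theorem natDegree_perronCubic [Nontrivial R] : (perronCubic R).natDegree = 3 := by
  unfold perronCubic; compute_degree!

theorem nextCoeff_perronCubic [Nontrivial R] : (perronCubic R).nextCoeff = 3 := by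
  rw [nextCoeff_of_natDegree_pos (by rw [natDegree_perronCubic]; omega),
    natDegree_perronCubic]
  simp [perronCubic]

end perronCubic

theorem aeval_int_perronCubic_ne_zero (m : ℤ) : aeval m (perronCubic ℤ) ≠ 0 := by
  rw [aeval_perronCubic]
  intro h
  have hdvd : m ∣ 46 := ⟨m ^ 2 + 3 * m - 15, by linear_combination -h⟩
  have : m ≤ 46 := Int.le_of_dvd (by norm_num) hdvd
  have : -46 ≤ m := by linarith [Int.le_of_dvd (by norm_num) hdvd.neg_left]
  interval_cases m <;> norm_num at h

theorem irreducible_perronCubic : Irreducible (perronCubic ℚ) := by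
  rw [(perronCubic_monic ℚ).irreducible_iff_roots_eq_zero_of_degree_le_three
      (by rw [natDegree_perronCubic]; omega) (by rw [natDegree_perronCubic]),
    Multiset.eq_zero_iff_forall_notMem]
  intro r hr
  have hr' : aeval r (perronCubic ℤ) = 0 := by
    rw [mem_roots (perronCubic_monic ℚ).ne_zero, IsRoot, ← coe_aeval_eq_eval,
      aeval_perronCubic] at hr
    rwa [aeval_perronCubic]
  obtain ⟨m, rfl, -⟩ := exists_integer_of_is_root_of_monic (perronCubic_monic ℤ) hr'
  rw [aeval_algebraMap_apply, map_eq_zero_iff _ (algebraMap ℤ ℚ).injective_int] at hr'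
  exact aeval_int_perronCubic_ne_zero m hr'

theorem minpoly_eq_perronCubic {lam : ℝ} (hroot : lam ^ 3 + 3 * lam ^ 2 - 15 * lam - 46 = 0) :
    minpoly ℚ lam = perronCubic ℚ :=
  (minpoly.eq_of_irreducible_of_monic irreducible_perronCubic
    (by rw [aeval_perronCubic, hroot]) (perronCubic_monic ℚ)).symm

theorem no_3x3_nonneg_integer_matrix_with_eigenvalue_general
    (lam : ℝ) (hroot : lam ^ 3 + 3 * lam ^ 2 - 15 * lam - 46 = 0) :
    ¬ ∃ (B : Matrix (Fin 3) (Fin 3) ℕ) (v : Fin 3 → ℝ), v ≠ 0 ∧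
      (B.map (Nat.cast : ℕ → ℝ)) *ᵥ v = lam • v := by
  rintro ⟨B, v, hv, hBv⟩
  set A : Matrix (Fin 3) (Fin 3) ℚ := B.map (Nat.cast : ℕ → ℚ)
  have hA : A.map (algebraMap ℚ ℝ) = B.map (Nat.cast : ℕ → ℝ) := by ext; simp [A]
  have htrace : A.trace = -3 := by
    rw [trace_eq_neg_nextCoeff_minpoly_of_mulVec_eq_smul hv (hA ▸ hBv)
        (by rw [minpoly_eq_perronCubic hroot, natDegree_perronCubic, Fintype.card_fin]),
      minpoly_eq_perronCubic hroot, nextCoeff_perronCubic]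
  have htrace_nonneg : 0 ≤ A.trace := Finset.sum_nonneg fun i _ => by simp [A]
  linarith

/-- if `λ` is the Perron root of `t³ + 3t² - 15t - 46` (a Perron number,
`λ ≈ 3.8916`), then no `3 × 3` matrix with nonnegative integer entries has `λ` as an
eigenvalue. -/
theorem no_3x3_nonneg_integer_matrix_with_eigenvalue
    (lam : ℝ) (hroot : lam ^ 3 + 3 * lam ^ 2 - 15 * lam - 46 = 0)
    (hperron : IsPerronNumber lam) :
    ¬ ∃ (B : Matrix (Fin 3) (Fin 3) ℕ) (v : Fin 3 → ℝ), v ≠ 0 ∧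
      (B.map (Nat.cast : ℕ → ℝ)) *ᵥ v = lam • v :=
  no_3x3_nonneg_integer_matrix_with_eigenvalue_general lam hroot
end
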